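/- The probability that a uniformly random derangement of N elements contains at least one 2-cycle converges to 1 - e^{-1/2} as N → ∞. -/

import Mathlib

/-!
A derangement without 2-cycles is a permutation all of whose cycles have length at least 3, so
`P_N = D_N - Q_N` where `Q_n` counts such permutations of `n` points. Cutting `0` out of its cycle
(which has length at least 4, or exactly 3) gives `Q_{n+3} = (n+2) (Q_{n+2} + (n+1) Q_n)`. The same
recurrence holds for `n!` times the partial sums of the Taylor coefficients of
`exp (-t - t²/2)`, so `Q_n / n! → e^{-1} e^{-1/2}`; together with `D_N / N! → e^{-1}` this
gives `Q_N / D_N → e^{-1/2}`.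
-/

/-- Number of derangements of an `N`-element set. -/
noncomputable def numDerangementsOf (N : ℕ) : ℕ :=
  Nat.card {σ : Equiv.Perm (Fin N) // ∀ i, σ i ≠ i}

/-- Number of fixed-point-free permutations of an `N`-element set having at least
one 2-cycle. -/
noncomputable def numPairedDerangements (N : ℕ) : ℕ :=
  Nat.card {σ : Equiv.Perm (Fin N) // (∀ i, σ i ≠ i) ∧ 2 ∈ σ.cycleType}

open Equiv Finset Filter Topology
open scoped Nat

namespace Equiv.Perm

variable {α : Type*}

/-- Every cycle of `σ` has length at least 3. -/
def NoShortCycles (σ : Perm α) : Prop := ∀ x, σ (σ x) ≠ x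

instance [Fintype α] [DecidableEq α] : DecidablePred (NoShortCycles (α := α)) :=
  fun σ => inferInstanceAs (Decidable (∀ x, σ (σ x) ≠ x))

theorem NoShortCycles.apply_ne {σ : Perm α} (h : NoShortCycles σ) (x : α) : σ x ≠ x :=
  fun hx => h x (by rw [hx, hx])

/-- The cycle of `p` has length at least 2, and all other cycles of `e` length at least 3. -/
def NoShortCyclesExcept (p : α) (e : Perm α) : Prop :=
  e p ≠ p ∧ ∀ i, e (e i) = i → i = p ∨ e i = p

instance [Fintype α] [DecidableEq α] (p : α) : DecidablePred (NoShortCyclesExcept p) :=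
  fun _ => inferInstanceAs (Decidable (_ ∧ _))

theorem two_mem_cycleType_iff [Fintype α] [DecidableEq α] {σ : Perm α} :
    2 ∈ σ.cycleType ↔ ∃ x, σ x ≠ x ∧ σ (σ x) = x := by
  rw [cycleType_def, Multiset.mem_map]
  constructor
  · rintro ⟨c, hc, hcard⟩
    obtain ⟨a, b, hab, rfl⟩ := card_support_eq_two.mp hcard
    have hagree := (mem_cycleFactorsFinset_iff.mp hc).2
    have ha := hagree a (by simp [support_swap hab])
    have hb := hagree b (by simp [support_swap hab])
    rw [swap_apply_left] at ha
    rw [swap_apply_right] at hb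
    exact ⟨a, ha ▸ hab.symm, by rw [← ha, ← hb]⟩
  · rintro ⟨x, hx, hxx⟩
    refine ⟨swap x (σ x), mem_cycleFactorsFinset_iff.mpr ⟨isCycle_swap hx.symm, ?_⟩,
      card_support_swap hx.symm⟩
    intro a ha
    rw [support_swap hx.symm, mem_insert, mem_singleton] at ha
    rcases ha with rfl | rfl <;> simp [hxx]

theorem noShortCycles_iff_forall_ne_and_two_notMem_cycleType [Fintype α] [DecidableEq α]
    (σ : Perm α) : NoShortCycles σ ↔ (∀ i, σ i ≠ i) ∧ 2 ∉ σ.cycleType := by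
  rw [two_mem_cycleType_iff, NoShortCycles]
  grind

theorem card_derangements_eq_card_two_mem_cycleType_add [Fintype α] [DecidableEq α] :
    Nat.card {σ : Perm α // ∀ i, σ i ≠ i} =
      Nat.card {σ : Perm α // (∀ i, σ i ≠ i) ∧ 2 ∈ σ.cycleType} +
        Nat.card {σ : Perm α // NoShortCycles σ} := by
  simp only [Nat.card_eq_fintype_card, Fintype.card_subtype]
  rw [← card_filter_add_card_filter_not (s := univ.filter fun σ : Perm α => ∀ i, σ i ≠ i)
    (2 ∈ ·.cycleType), filter_filter, filter_filter]
  exact congrArg _ (congrArg card (filter_congr fun σ _ =>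
    (noShortCycles_iff_forall_ne_and_two_notMem_cycleType σ).symm))

theorem card_noShortCycles_congr {β : Type*} [Fintype α] [DecidableEq α] [Fintype β]
    [DecidableEq β] (f : α ≃ β) :
    Fintype.card {σ : Perm α // NoShortCycles σ} =
      Fintype.card {σ : Perm β // NoShortCycles σ} :=
  Fintype.card_congr <| f.permCongr.subtypeEquiv fun σ => by
    simp only [NoShortCycles, permCongr_apply]
    exact ⟨fun h x => by simpa [← f.eq_symm_apply] using h (f.symm x),
      fun h x => by simpa using h (f x)⟩

theorem card_subtype_ne_and_ne [Fintype α] [DecidableEq α] {p q : α} (hpq : p ≠ q) :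
    Fintype.card {i // i ≠ p ∧ i ≠ q} = Fintype.card α - 2 := by
  have : (univ.filter fun i => i ≠ p ∧ i ≠ q) = {p, q}ᶜ := by ext; simp
  rw [Fintype.card_subtype, this, card_compl, card_pair hpq]

theorem card_swapping_pair_eq_card_noShortCycles_compl [Fintype α] [DecidableEq α] {p q : α} :
    Fintype.card {e : Perm α // e p = q ∧ e q = p ∧
        ∀ i, i ≠ p → i ≠ q → e (e i) ≠ i} =
      Fintype.card {g : Perm {i // i ≠ p ∧ i ≠ q} // NoShortCycles g} := by
  have hS : ∀ e : Perm α, e p = q → e q = p →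
      ∀ x, (e x ≠ p ∧ e x ≠ q) ↔ (x ≠ p ∧ x ≠ q) := by
    intro e hp hq x
    rw [e.injective.ne_iff' hq, e.injective.ne_iff' hp, and_comm]
  have hswap : ∀ (g : Perm {i // i ≠ p ∧ i ≠ q}) (x : {i // i ≠ p ∧ i ≠ q}),
      (swap p q * ofSubtype g) x = g x := by
    intro g x
    rw [mul_apply, ofSubtype_apply_coe]
    exact swap_apply_of_ne_of_ne (g x).2.1 (g x).2.2
  refine Fintype.card_congr
    { toFun := fun e => ⟨e.1.subtypePerm (hS e.1 e.2.1 e.2.2.1), fun x h => ?_⟩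
      invFun := fun g => ⟨swap p q * ofSubtype g.1, ?_⟩
      left_inv := ?_
      right_inv := ?_ }
  · exact e.2.2.2 x x.2.1 x.2.2 (congrArg Subtype.val h)
  · have hfix : ∀ a, ¬(a ≠ p ∧ a ≠ q) → ofSubtype g.1 a = a :=
      fun a ha => ofSubtype_apply_of_not_mem g.1 ha
    refine ⟨by simp [hfix], by simp [hfix], fun i hip hiq => ?_⟩
    rw [hswap g.1 ⟨i, hip, hiq⟩, hswap g.1 (g.1 _)]
    exact fun h => g.2 ⟨i, hip, hiq⟩ (Subtype.ext h)
  · rintro ⟨e, hp, hq, -⟩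
    ext x
    rcases eq_or_ne x p with rfl | hxp
    · simp [ofSubtype_apply_of_not_mem, hp]
    rcases eq_or_ne x q with rfl | hxq
    · simp [ofSubtype_apply_of_not_mem, hq]
    · rw [hswap _ ⟨x, hxp, hxq⟩]; rfl
  · rintro ⟨g, hg⟩
    ext x
    simp [hswap]

/-- Split according to whether the cycle of `p` has length at least 3, or is a 2-cycle `(p q)`. -/
theorem card_noShortCyclesExcept [Fintype α] [DecidableEq α] (p : α) :
    Fintype.card {e : Perm α // NoShortCyclesExcept p e} =
      Fintype.card {e : Perm α // NoShortCycles e} +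
        ∑ q ∈ univ.erase p,
          Fintype.card {g : Perm {i // i ≠ p ∧ i ≠ q} // NoShortCycles g} := by
  have hlong : ∀ e : Perm α, NoShortCyclesExcept p e ∧ ¬e (e p) = p ↔ NoShortCycles e := by
    intro e
    unfold NoShortCyclesExcept NoShortCycles
    grind
  have htwo : ∀ q, q ≠ p → ∀ e : Perm α,
      (NoShortCyclesExcept p e ∧ e (e p) = p) ∧ e p = q ↔
      e p = q ∧ e q = p ∧ ∀ i, i ≠ p → i ≠ q → e (e i) ≠ i := by
    intro q hq e
    unfold NoShortCyclesExcept
    grind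
  rw [Fintype.card_subtype, Fintype.card_subtype, ← card_filter_add_card_filter_not
    (fun e : Perm α => ¬e (e p) = p), filter_filter, filter_filter,
    filter_congr fun e _ => hlong e]
  congr 1
  rw [card_eq_sum_card_fiberwise (f := fun e => e p) (t := univ.erase p)
      fun e he => mem_erase.mpr ⟨(mem_filter.mp he).2.1.1, mem_univ _⟩]
  refine sum_congr rfl fun q hq => ?_
  rw [← card_swapping_pair_eq_card_noShortCycles_compl, Fintype.card_subtype, filter_filter]
  simp only [not_not]
  exact congrArg card (filter_congr fun e _ => htwo q (ne_of_mem_erase hq) e)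

theorem noShortCycles_decomposeFin_symm_succ_iff {n : ℕ} (p : Fin n) (e : Perm (Fin n)) :
    NoShortCycles (decomposeFin.symm (p.succ, e)) ↔ NoShortCyclesExcept p e := by
  have h0 : decomposeFin.symm (p.succ, e) 0 = p.succ := decomposeFin_symm_apply_zero _ _
  have hs : ∀ i, decomposeFin.symm (p.succ, e) i.succ = if e i = p then 0 else (e i).succ := by
    intro i
    rw [decomposeFin_symm_apply_succ]
    split_ifs with h
    · simp [h]
    · exact swap_apply_of_ne_of_ne (Fin.succ_ne_zero _) (by simpa using h)
  simp only [NoShortCycles, NoShortCyclesExcept, Fin.forall_fin_succ, h0, hs]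
  constructor
  · rintro ⟨h1, h2⟩
    refine ⟨fun h => h1 (by simp [h]), fun i hi => ?_⟩
    by_contra! hne
    have := h2 i
    simp only [if_neg hne.2, hs, hi, if_neg hne.1] at this
    exact this rfl
  · rintro ⟨h1, h2⟩
    refine ⟨by simp [h1], fun i => ?_⟩
    split_ifs <;> grind

theorem card_noShortCycles_fin_succ (n : ℕ) :
    Fintype.card {σ : Perm (Fin (n + 1)) // NoShortCycles σ} =
      ∑ p : Fin n, Fintype.card {e : Perm (Fin n) // NoShortCyclesExcept p e} := by
  rw [Fintype.card_congr (decomposeFin.subtypeEquiv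
      (q := fun x => NoShortCycles (decomposeFin.symm x)) fun σ => by rw [symm_apply_apply]),
    Fintype.card_congr
      (subtypeProdEquivSigmaSubtype fun a e => NoShortCycles (decomposeFin.symm (a, e))),
    Fintype.card_sigma, Fin.sum_univ_succ]
  have hzero : IsEmpty {e : Perm (Fin n) // NoShortCycles (decomposeFin.symm (0, e))} :=
    ⟨fun ⟨e, he⟩ => he.apply_ne 0 (decomposeFin_symm_apply_zero 0 e)⟩
  rw [Fintype.card_eq_zero, zero_add]
  exact sum_congr rfl fun p _ =>
    Fintype.card_congr (subtypeEquivRight fun e => noShortCycles_decomposeFin_symm_succ_iff p e)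

end Equiv.Perm

open Equiv.Perm

def numNoShortCycles (n : ℕ) : ℕ := Fintype.card {σ : Perm (Fin n) // NoShortCycles σ}

theorem numNoShortCycles_add_three (n : ℕ) :
    numNoShortCycles (n + 3) =
      (n + 2) * (numNoShortCycles (n + 2) + (n + 1) * numNoShortCycles n) := by
  have hfiber : ∀ p q : Fin (n + 2), q ∈ univ.erase p →
      Fintype.card {g : Perm {i // i ≠ p ∧ i ≠ q} // NoShortCycles g} = numNoShortCycles n :=
    fun p q hq => card_noShortCycles_congr <| Fintype.equivFinOfCardEq <| by
      rw [card_subtype_ne_and_ne (ne_of_mem_erase hq).symm, Fintype.card_fin]; rfl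
  have hterm : ∀ p : Fin (n + 2),
      Fintype.card {e : Perm (Fin (n + 2)) // NoShortCyclesExcept p e} =
        numNoShortCycles (n + 2) + (n + 1) * numNoShortCycles n := fun p => by
    rw [card_noShortCyclesExcept, sum_congr rfl (hfiber p), sum_const,
      card_erase_of_mem (mem_univ _), card_univ, Fintype.card_fin, smul_eq_mul]
    rfl
  rw [numNoShortCycles, card_noShortCycles_fin_succ, sum_congr rfl fun p _ => hterm p, sum_const,
    card_univ, Fintype.card_fin, smul_eq_mul]

theorem numNoShortCycles_zero : numNoShortCycles 0 = 1 := by decide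

theorem numNoShortCycles_one : numNoShortCycles 1 = 0 := by decide

theorem numNoShortCycles_two : numNoShortCycles 2 = 0 := by decide

theorem numPairedDerangements_add_numNoShortCycles (N : ℕ) :
    numPairedDerangements N + numNoShortCycles N = numDerangementsOf N := by
  rw [numNoShortCycles, ← Nat.card_eq_fintype_card]
  exact card_derangements_eq_card_two_mem_cycleType_add.symm

theorem numDerangementsOf_eq_numDerangements (N : ℕ) :
    numDerangementsOf N = numDerangements N := by
  rw [← card_derangements_fin_eq_numDerangements, ← Nat.card_eq_fintype_card]
  rfl

def pairsOfWeight (m : ℕ) : Finset (ℕ × ℕ) :=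
  (range (m + 1) ×ˢ range (m + 1)).filter fun p => p.1 + 2 * p.2 = m

theorem mem_pairsOfWeight {m : ℕ} {p : ℕ × ℕ} :
    p ∈ pairsOfWeight m ↔ p.1 + 2 * p.2 = m := by
  simp only [pairsOfWeight, mem_filter, mem_product, mem_range]
  omega

section ExpQuadratic

variable (x y : ℝ)

noncomputable def expProdTerm (p : ℕ × ℕ) : ℝ := x ^ p.1 / p.1 ! * (y ^ p.2 / p.2 !)

/-- The coefficient of `t ^ m` in `exp (x t + y t ^ 2)`. -/
noncomputable def expQuadCoeff (m : ℕ) : ℝ := ∑ p ∈ pairsOfWeight m, expProdTerm x y p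

theorem hasSum_expProdTerm : HasSum (expProdTerm x y) (Real.exp x * Real.exp y) := by
  have hexp : ∀ z : ℝ, HasSum (fun n => z ^ n / n !) (Real.exp z) := fun z => by
    rw [Real.exp_eq_exp_ℝ]; exact NormedSpace.expSeries_div_hasSum_exp z
  have hnorm : ∀ z : ℝ, Summable fun n => ‖z ^ n / (n ! : ℝ)‖ := fun z => by
    simpa [norm_div, norm_pow] using Real.summable_pow_div_factorial ‖z‖
  exact (hexp x).mul (hexp y) (summable_mul_of_summable_norm (f := fun n => x ^ n / (n ! : ℝ))
    (g := fun n => y ^ n / (n ! : ℝ)) (hnorm x) (hnorm y))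

theorem hasSum_expQuadCoeff : HasSum (expQuadCoeff x y) (Real.exp x * Real.exp y) := by
  have hfiber : ∀ m, ((pairsOfWeight m : Finset (ℕ × ℕ)) : Set (ℕ × ℕ)) =
      (fun p : ℕ × ℕ => p.1 + 2 * p.2) ⁻¹' {m} := fun m => by
    ext p; simp [mem_pairsOfWeight]
  refine ((hasSum_expProdTerm x y).tsum_fiberwise (fun p => p.1 + 2 * p.2)).congr_fun fun m => ?_
  rw [expQuadCoeff, ← Finset.tsum_subtype', hfiber]

theorem natCast_mul_expProdTerm_fst (i j : ℕ) :
    (i + 1 : ℕ) * expProdTerm x y (i + 1, j) = x * expProdTerm x y (i, j) := by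
  simp only [expProdTerm, pow_succ, Nat.factorial_succ]; push_cast; field_simp

theorem natCast_mul_expProdTerm_snd (i j : ℕ) :
    (j + 1 : ℕ) * expProdTerm x y (i, j + 1) = y * expProdTerm x y (i, j) := by
  simp only [expProdTerm, pow_succ, Nat.factorial_succ]; push_cast; field_simp

theorem sum_pairsOfWeight_fst_mul (m : ℕ) :
    ∑ p ∈ pairsOfWeight (m + 1), p.1 * expProdTerm x y p = x * expQuadCoeff x y m := by
  rw [expQuadCoeff, mul_sum]
  refine sum_bij_ne_zero (fun p _ _ => (p.1 - 1, p.2)) (fun p hp hp0 => ?_)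
    (fun p _ hp0 q _ hq0 h => ?_) (fun q hq hq0 => ⟨(q.1 + 1, q.2), ?_, ?_, ?_⟩)
    (fun p _ hp0 => ?_)
  · have : p.1 ≠ 0 := by exact_mod_cast left_ne_zero_of_mul hp0
    rw [mem_pairsOfWeight] at hp ⊢; omega
  · have : p.1 ≠ 0 := by exact_mod_cast left_ne_zero_of_mul hp0
    have : q.1 ≠ 0 := by exact_mod_cast left_ne_zero_of_mul hq0
    simp only [Prod.mk.injEq] at h
    exact Prod.ext (by omega) h.2
  · rw [mem_pairsOfWeight] at hq ⊢; omega
  · rwa [natCast_mul_expProdTerm_fst]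
  · simp
  · obtain ⟨_ | i, j⟩ := p
    · simp at hp0
    · exact natCast_mul_expProdTerm_fst x y i j

theorem sum_pairsOfWeight_snd_mul (m : ℕ) :
    ∑ p ∈ pairsOfWeight (m + 2), p.2 * expProdTerm x y p = y * expQuadCoeff x y m := by
  rw [expQuadCoeff, mul_sum]
  refine sum_bij_ne_zero (fun p _ _ => (p.1, p.2 - 1)) (fun p hp hp0 => ?_)
    (fun p _ hp0 q _ hq0 h => ?_) (fun q hq hq0 => ⟨(q.1, q.2 + 1), ?_, ?_, ?_⟩)
    (fun p _ hp0 => ?_)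
  · have : p.2 ≠ 0 := by exact_mod_cast left_ne_zero_of_mul hp0
    rw [mem_pairsOfWeight] at hp ⊢; omega
  · have : p.2 ≠ 0 := by exact_mod_cast left_ne_zero_of_mul hp0
    have : q.2 ≠ 0 := by exact_mod_cast left_ne_zero_of_mul hq0
    simp only [Prod.mk.injEq] at h
    exact Prod.ext h.1 (by omega)
  · rw [mem_pairsOfWeight] at hq ⊢; omega
  · rwa [natCast_mul_expProdTerm_snd]
  · simp
  · obtain ⟨i, _ | j⟩ := p
    · simp at hp0
    · exact natCast_mul_expProdTerm_snd x y i j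

theorem expQuadCoeff_add_two (m : ℕ) :
    (m + 2) * expQuadCoeff x y (m + 2) =
      x * expQuadCoeff x y (m + 1) + 2 * y * expQuadCoeff x y m := by
  have hweight : ∀ p ∈ pairsOfWeight (m + 2),
      (m + 2) * expProdTerm x y p = p.1 * expProdTerm x y p + 2 * (p.2 * expProdTerm x y p) :=
    fun p hp => by
      have : (p.1 : ℝ) + 2 * p.2 = m + 2 := by exact_mod_cast mem_pairsOfWeight.mp hp
      linear_combination -this * expProdTerm x y p
  rw [expQuadCoeff, mul_sum, sum_congr rfl hweight, sum_add_distrib, ← mul_sum,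
    sum_pairsOfWeight_fst_mul, sum_pairsOfWeight_snd_mul]
  ring

theorem expQuadCoeff_zero : expQuadCoeff x y 0 = 1 := by
  simp [expQuadCoeff, show pairsOfWeight 0 = {(0, 0)} by decide, expProdTerm]

theorem expQuadCoeff_one : expQuadCoeff x y 1 = x := by
  simp [expQuadCoeff, show pairsOfWeight 1 = {(1, 0)} by decide, expProdTerm]

end ExpQuadratic

theorem numNoShortCycles_eq_factorial_mul_sum (n : ℕ) :
    (numNoShortCycles n : ℝ) = n ! * ∑ m ∈ range (n + 1), expQuadCoeff (-1) (-(1 / 2)) m := by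
  induction n using Nat.strong_induction_on with
  | _ n ih =>
    match n with
    | 0 => simp [numNoShortCycles_zero, expQuadCoeff_zero]
    | 1 => simp [numNoShortCycles_one, sum_range_succ, expQuadCoeff_zero, expQuadCoeff_one]
    | 2 =>
      have hc := expQuadCoeff_add_two (-1) (-(1 / 2)) 0
      simp [numNoShortCycles_two, sum_range_succ, expQuadCoeff_zero, expQuadCoeff_one] at hc ⊢
      linear_combination hc
    | n + 3 =>
      have hc : ((n : ℝ) + 3) * expQuadCoeff (-1) (-(1 / 2)) (n + 3) =
          -expQuadCoeff (-1) (-(1 / 2)) (n + 2) - expQuadCoeff (-1) (-(1 / 2)) (n + 1) := by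
        have := expQuadCoeff_add_two (-1) (-(1 / 2)) (n + 1)
        push_cast at this
        linear_combination this
      rw [numNoShortCycles_add_three]
      push_cast
      rw [ih (n + 2) (by omega), ih n (by omega)]
      simp only [sum_range_succ, Nat.factorial_succ] at hc ⊢
      push_cast at hc ⊢
      linear_combination -((n : ℝ) + 2) * ((n : ℝ) + 1) * (n ! : ℝ) * hc

theorem tendsto_numNoShortCycles_div_factorial :
    Tendsto (fun n => (numNoShortCycles n : ℝ) / n !) atTop
      (𝓝 (Real.exp (-1) * Real.exp (-(1 / 2)))) := by
  refine ((hasSum_expQuadCoeff _ _).tendsto_sum_nat.comp (tendsto_add_atTop_nat 1)).congr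
    fun n => ?_
  rw [Function.comp_apply, numNoShortCycles_eq_factorial_mul_sum,
    mul_div_cancel_left₀ _ (by positivity)]

theorem prob_at_least_one_pair_tendsto :
    Filter.Tendsto
      (fun N : ℕ => (numPairedDerangements N : ℝ) / (numDerangementsOf N : ℝ))
      Filter.atTop (nhds (1 - Real.exp (-(1 / 2)))) := by
  have hD : Tendsto (fun N => (numDerangementsOf N : ℝ) / N !) atTop (𝓝 (Real.exp (-1))) := by
    simpa only [numDerangementsOf_eq_numDerangements] using numDerangements_tendsto_inv_e
  have hlim := tendsto_const_nhds (x := (1 : ℝ)).sub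
    (tendsto_numNoShortCycles_div_factorial.div hD (Real.exp_ne_zero _))
  rw [mul_div_cancel_left₀ _ (Real.exp_ne_zero _)] at hlim
  refine hlim.congr' ?_
  filter_upwards [hD.eventually_ne (Real.exp_ne_zero _)] with N hN
  have hDN : (numDerangementsOf N : ℝ) ≠ 0 := (div_ne_zero_iff.mp hN).1
  have hP : (numPairedDerangements N : ℝ) = numDerangementsOf N - numNoShortCycles N := by
    rw [← numPairedDerangements_add_numNoShortCycles N]; push_cast; ring
  rw [hP, Pi.div_apply]
  field_simp
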